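/- There is an absolute constant C > 0 such that for every 0 < p ≤ 2, every f ∈ H^p(δ²) with atomic decomposition (f_n, R_n)_{n∈ℤ}, and every n ∈ ℤ: ‖f_n‖₂² ≤ C · 2^{2n} · |F_n|. -/

import Mathlib

open MeasureTheory Set
open scoped ENNReal

/-- A dyadic interval `[k/2^n, (k+1)/2^n) ⊆ [0,1)`. -/
structure DyadicInterval where
  n : ℕ
  k : ℕ
  hk : k < 2 ^ n

namespace DyadicInterval

/-- Left endpoint. -/
noncomputable def left (I : DyadicInterval) : ℝ := I.k / 2 ^ I.n

/-- Right endpoint. -/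
noncomputable def right (I : DyadicInterval) : ℝ := (I.k + 1) / 2 ^ I.n

/-- Midpoint. -/
noncomputable def mid (I : DyadicInterval) : ℝ := (I.k + 1 / 2) / 2 ^ I.n

/-- The underlying point set of the dyadic interval. -/
noncomputable def set (I : DyadicInterval) : Set ℝ := Set.Ico I.left I.right

/-- The length `|I| = 2^{-n}`. -/
noncomputable def len (I : DyadicInterval) : ℝ := 1 / 2 ^ I.n

/-- The `L^∞`-normalised Haar function `h_I`: `+1` on the left half of `I`,
`-1` on the right half of `I`, `0` elsewhere. -/
noncomputable def haar (I : DyadicInterval) (s : ℝ) : ℝ :=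
  if s ∈ Set.Ico I.left I.mid then 1
  else if s ∈ Set.Ico I.mid I.right then -1
  else 0

end DyadicInterval

/-- A dyadic rectangle `I × J`. -/
abbrev DyadicRect := DyadicInterval × DyadicInterval

namespace DyadicRect

/-- The underlying point set of the dyadic rectangle. -/
noncomputable def set (R : DyadicRect) : Set (ℝ × ℝ) := R.1.set ×ˢ R.2.set

/-- The area `|I||J|`. -/
noncomputable def area (R : DyadicRect) : ℝ := R.1.len * R.2.len

/-- The 2D Haar function `h_{I×J}(s,t) = h_I(s) h_J(t)`. -/
noncomputable def haar (R : DyadicRect) (x : ℝ × ℝ) : ℝ := R.1.haar x.1 * R.2.haar x.2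

end DyadicRect

/-- The unit square `[0,1]²`. -/
noncomputable def unitSq : Set (ℝ × ℝ) := Set.Icc (0:ℝ) 1 ×ˢ Set.Icc (0:ℝ) 1

/-- The square function `S(f)(s,t) = (∑_{I×J} f_{I×J}² 1_{I×J}(s,t))^{1/2}`,
valued in `ℝ≥0∞`. -/
noncomputable def sqS (f : DyadicRect → ℝ) (x : ℝ × ℝ) : ℝ≥0∞ :=
  (∑' R : DyadicRect, Set.indicator R.set (fun _ => ENNReal.ofReal (f R ^ 2)) x) ^ (1/2 : ℝ)

/-- The `H^p(δ²)` quasi-norm `‖f‖_{H^p} = (∫_{[0,1]²} S(f)^p dm)^{1/p}`, valued in `ℝ≥0∞`.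
Membership `f ∈ H^p(δ²)` is expressed as `Hnorm p f ≠ ∞`. -/
noncomputable def Hnorm (p : ℝ) (f : DyadicRect → ℝ) : ℝ≥0∞ :=
  (∫⁻ x in unitSq, sqS f x ^ p) ^ (1/p)

/-- `‖f‖₂ = ‖f‖_{H²(δ²)} = (∑_{I×J} f_{I×J}² |I||J|)^{1/2}`. -/
noncomputable def l2norm (f : DyadicRect → ℝ) : ℝ≥0∞ :=
  (∑' R : DyadicRect, ENNReal.ofReal (f R ^ 2) * ENNReal.ofReal R.area) ^ (1/2 : ℝ)

/-- The level set `F_n = {(s,t) ∈ [0,1]² : S(f)(s,t) > 2^n}`. -/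
noncomputable def Fset (f : DyadicRect → ℝ) (n : ℤ) : Set (ℝ × ℝ) :=
  {x ∈ unitSq | (2 : ℝ≥0∞) ^ (n : ℝ) < sqS f x}

/-- The collection `R_n` of dyadic rectangles `I×J` with
`|(I×J) ∩ F_n| > |I×J|/2` and `|(I×J) ∩ F_{n+1}| ≤ |I×J|/2`. -/
noncomputable def Rcoll (f : DyadicRect → ℝ) (n : ℤ) : Set DyadicRect :=
  {R | ENNReal.ofReal R.area / 2 < volume (R.set ∩ Fset f n) ∧
       volume (R.set ∩ Fset f (n + 1)) ≤ ENNReal.ofReal R.area / 2}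

/-- The atom `f_n = ∑_{I×J ∈ R_n} f_{I×J} h_{I×J}`, i.e. the coefficient
sequence of `f` restricted to `R_n`. -/
noncomputable def fAtom (f : DyadicRect → ℝ) (n : ℤ) : DyadicRect → ℝ :=
  (Rcoll f n).indicator f

/-- The point set `R_n* = ⋃_{I×J ∈ R_n} I×J`. -/
noncomputable def RcollStar (f : DyadicRect → ℝ) (n : ℤ) : Set (ℝ × ℝ) :=
  ⋃ R ∈ Rcoll f n, R.set

/-!
A rectangle of `R_n` has at least half of its area outside `F_{n+1}`, where `S(f)² ≤ 2^{2n+2}`,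
so `‖f_n‖₂² ≤ 2 · 2^{2n+2} |R_n*|`. A rectangle of `R_n` is more than half filled by `F_n`, so
`R_n*` lies in the set where the dyadic maximal function in the first variable of the indicator
of `{M₂ 1_{F_n} > 1/4}` exceeds `1/4`, `M₂` being the dyadic maximal function in the second
variable. The weak type `(1,1)` bound of the one-dimensional dyadic maximal function, used once
in each variable, gives `|R_n*| ≤ 16 |F_n|`, whence `C = 128`.
-/

theorem measure_le_two_mul_measure_diff {α : Type*} [MeasurableSpace α] {μ : Measure α}
    {S T : Set α} (hS : μ S ≠ ∞) (hST : μ (S ∩ T) ≤ μ S / 2) : μ S ≤ 2 * μ (S \ T) := by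
  have hhalf : μ S / 2 ≤ μ (S \ T) := by
    refine (ENNReal.add_le_add_iff_left (ENNReal.div_ne_top hS two_ne_zero)).1 ?_
    calc μ S / 2 + μ S / 2 = μ S := ENNReal.add_halves _
      _ ≤ μ (S ∩ T) + μ (S \ T) := measure_le_inter_add_sdiff μ S T
      _ ≤ μ S / 2 + μ (S \ T) := by gcongr
  calc μ S = 2 * (μ S / 2) := (ENNReal.mul_div_cancel two_ne_zero ENNReal.ofNat_ne_top).symm
    _ ≤ 2 * μ (S \ T) := by gcongr

/-- Chebyshev's inequality for the sections `B_s ⊆ T`. -/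
theorem mul_prod_le_of_subset_prod {α β : Type*} [MeasurableSpace α] [MeasurableSpace β]
    {μ : Measure α} {ν : Measure β} [SFinite ν] {S : Set α} {T : Set β} {B : Set (α × β)}
    (hS : MeasurableSet S) (hB : MeasurableSet B) (hBST : B ⊆ S ×ˢ T) (c : ℝ≥0∞) :
    c * μ.prod ν B ≤ c * ν T * μ {s ∈ S | ν T < c * ν (Prod.mk s ⁻¹' B)} + ν T * μ S := by
  have hφ := measurable_measure_prodMk_left (ν := ν) hB
  set G := {s ∈ S | ν T < c * ν (Prod.mk s ⁻¹' B)}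
  have hG : MeasurableSet G := hS.inter (measurableSet_lt measurable_const (hφ.const_mul c))
  rw [Measure.prod_apply hB, ← lintegral_const_mul _ hφ, ← lintegral_indicator_const hG,
    ← lintegral_indicator_const hS, ← lintegral_add_left (measurable_const.indicator hG)]
  refine lintegral_mono fun s => ?_
  by_cases hs : s ∈ S
  · by_cases hsG : s ∈ G
    · have hsec : Prod.mk s ⁻¹' B ⊆ T := fun t ht => (hBST ht).2
      rw [indicator_of_mem hsG]
      exact (mul_le_mul_right (measure_mono hsec) c).trans le_self_add
    · rw [indicator_of_notMem hsG, indicator_of_mem hs, zero_add]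
      exact not_lt.1 fun h => hsG ⟨hs, h⟩
  · have hsec : Prod.mk s ⁻¹' B = ∅ := eq_empty_of_forall_notMem fun t ht => hs (hBST ht).1
    simp [hsec]

namespace DyadicInterval

instance : Countable DyadicInterval :=
  Function.Injective.countable (f := fun I : DyadicInterval => (I.n, I.k))
    fun ⟨_, _, _⟩ ⟨_, _, _⟩ h => by cases h; rfl

theorem measurableSet_set (I : DyadicInterval) : MeasurableSet I.set :=
  measurableSet_Ico

theorem volume_set (I : DyadicInterval) : volume I.set = ENNReal.ofReal I.len := by
  rw [set, Real.volume_Ico, left, right, len]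
  congr 1
  field_simp
  ring

theorem volume_set_ne_top (I : DyadicInterval) : volume I.set ≠ ∞ := by
  simp [volume_set]

theorem set_subset_Ico (I : DyadicInterval) : I.set ⊆ Ico 0 1 := by
  rintro x ⟨hl, hr⟩
  have hk : (I.k : ℝ) + 1 ≤ 2 ^ I.n := by exact_mod_cast I.hk
  refine ⟨le_trans (by rw [left]; positivity) hl, hr.trans_le ?_⟩
  rwa [right, div_le_one (by positivity)]

theorem mem_set_iff {I : DyadicInterval} {x : ℝ} : x ∈ I.set ↔ ⌊x * 2 ^ I.n⌋ = I.k := by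
  have h : (0 : ℝ) < 2 ^ I.n := by positivity
  rw [Int.floor_eq_iff, set, left, right, mem_Ico, div_le_iff₀ h, lt_div_iff₀ h]
  push_cast
  rfl

theorem floor_mul_two_pow_of_le (x : ℝ) {m n : ℕ} (h : m ≤ n) :
    ⌊x * 2 ^ m⌋ = ⌊x * 2 ^ n⌋ / 2 ^ (n - m) := by
  obtain ⟨d, rfl⟩ := Nat.exists_eq_add_of_le h
  have : x * 2 ^ m = x * 2 ^ (m + d) / ((2 ^ d : ℕ) : ℝ) := by
    push_cast
    field_simp
    ring
  rw [this, Int.floor_div_natCast, Nat.add_sub_cancel_left]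
  push_cast
  rfl

theorem set_subset_of_le {I I' : DyadicInterval} (h : I.n ≤ I'.n)
    (hne : (I.set ∩ I'.set).Nonempty) : I'.set ⊆ I.set := by
  obtain ⟨x, hxI, hxI'⟩ := hne
  intro y hy
  rw [mem_set_iff] at hxI hxI' hy ⊢
  rw [floor_mul_two_pow_of_le y h, hy, ← hxI', ← floor_mul_two_pow_of_le x h, hxI]

theorem set_injective : Function.Injective DyadicInterval.set := by
  intro I I' h
  have hn : I.n = I'.n := by
    have hlen := congrArg volume h
    rw [volume_set, volume_set, ENNReal.ofReal_eq_ofReal_iff (by simp [len]) (by simp [len]),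
      len, len, one_div, one_div, inv_inj] at hlen
    exact Nat.pow_right_injective le_rfl (by exact_mod_cast hlen)
  have hmem : I.left ∈ I.set := by
    refine ⟨le_rfl, ?_⟩
    rw [left, right]
    gcongr
    linarith
  have hk := mem_set_iff.1 hmem
  rw [h, mem_set_iff, ← hn] at hmem
  obtain ⟨n, k, _⟩ := I
  obtain ⟨n', k', _⟩ := I'
  simp only at hn
  subst hn
  simp only [mk.injEq, true_and]
  exact_mod_cast hk.symm.trans hmem

theorem exists_maximal_superset {P : DyadicInterval → Prop} {I : DyadicInterval} (hI : P I) :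
    ∃ I₀, P I₀ ∧ I.set ⊆ I₀.set ∧
      ∀ I', P I' → (I₀.set ∩ I'.set).Nonempty → I'.set ⊆ I₀.set := by
  classical
  have hex : ∃ m, ∃ I', I'.n = m ∧ P I' ∧ I.set ⊆ I'.set := ⟨I.n, I, rfl, hI, subset_rfl⟩
  obtain ⟨I₀, hn, hP, hsub⟩ := Nat.find_spec hex
  refine ⟨I₀, hP, hsub, fun I' hI' hne => ?_⟩
  rcases le_or_gt I₀.n I'.n with hle | hlt
  · exact set_subset_of_le hle hne
  · have hI₀ : I₀.set ⊆ I'.set := set_subset_of_le hlt.le (inter_comm _ _ ▸ hne)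
    exact absurd (Nat.find_min' hex ⟨I', rfl, hI', hsub.trans hI₀⟩) (by omega)

/-- The superlevel set `{M 1_A > 1/c}` of the dyadic maximal function of `1_A`. -/
def maxSet (c : ℝ≥0∞) (A : Set ℝ) : Set ℝ :=
  ⋃ (I : DyadicInterval) (_ : volume I.set < c * volume (I.set ∩ A)), I.set

theorem volume_maxSet_le (c : ℝ≥0∞) {A : Set ℝ} (hA : MeasurableSet A) :
    volume (maxSet c A) ≤ c * volume A := by
  set heavy : DyadicInterval → Prop := fun I => volume I.set < c * volume (I.set ∩ A)
  set top : Set DyadicInterval :=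
    {I | heavy I ∧ ∀ I', heavy I' → (I.set ∩ I'.set).Nonempty → I'.set ⊆ I.set}
  have hcover : maxSet c A = ⋃ I ∈ top, I.set := by
    refine subset_antisymm (iUnion₂_subset fun I hI => ?_)
      (biUnion_mono (fun I hI => hI.1) fun _ _ => subset_rfl)
    obtain ⟨I₀, hP, hsub, hmax⟩ := exists_maximal_superset (P := heavy) hI
    exact hsub.trans (subset_biUnion_of_mem (u := set) ⟨hP, hmax⟩)
  have hdisj : top.PairwiseDisjoint set := by
    intro I hI I' hI' hne
    by_contra hmeet
    rw [Function.onFun, not_disjoint_iff_nonempty_inter] at hmeet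
    exact hne (set_injective
      ((hI'.2 I hI.1 (inter_comm _ _ ▸ hmeet)).antisymm (hI.2 I' hI'.1 hmeet)))
  have hdisjA : top.PairwiseDisjoint fun I => I.set ∩ A :=
    hdisj.mono fun _ => inter_subset_left
  calc volume (maxSet c A) = ∑' I : top, volume (I : DyadicInterval).set := by
        rw [hcover, measure_biUnion top.to_countable hdisj fun I _ => I.measurableSet_set]
    _ ≤ ∑' I : top, c * volume ((I : DyadicInterval).set ∩ A) :=
        ENNReal.tsum_le_tsum fun I => I.2.1.le
    _ = c * volume (⋃ I ∈ top, I.set ∩ A) := by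
        rw [ENNReal.tsum_mul_left, measure_biUnion top.to_countable hdisjA
          fun I _ => I.measurableSet_set.inter hA]
    _ ≤ c * volume A := by gcongr; exact iUnion₂_subset fun _ _ => inter_subset_right

end DyadicInterval

open DyadicInterval

/-- The set where the dyadic maximal function in the second variable of `1_B` exceeds `1/c`. -/
def sndMaxSet (c : ℝ≥0∞) (B : Set (ℝ × ℝ)) : Set (ℝ × ℝ) :=
  {x | x.2 ∈ maxSet c {t | (x.1, t) ∈ B}}

/-- The same in the first variable. -/
def fstMaxSet (c : ℝ≥0∞) (B : Set (ℝ × ℝ)) : Set (ℝ × ℝ) :=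
  Prod.swap ⁻¹' sndMaxSet c (Prod.swap ⁻¹' B)

theorem measurableSet_sndMaxSet (c : ℝ≥0∞) {B : Set (ℝ × ℝ)} (hB : MeasurableSet B) :
    MeasurableSet (sndMaxSet c B) := by
  have hunion : sndMaxSet c B =
      ⋃ J : DyadicInterval,
        {s | volume J.set < c * volume (J.set ∩ {t | (s, t) ∈ B})} ×ˢ J.set := by
    ext x
    simp [sndMaxSet, maxSet, and_comm]
  rw [hunion]
  refine .iUnion fun J => (measurableSet_lt measurable_const ?_).prod J.measurableSet_set
  exact (measurable_measure_prodMk_left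
    ((measurable_snd J.measurableSet_set).inter hB)).const_mul c

theorem volume_sndMaxSet_le (c : ℝ≥0∞) {B : Set (ℝ × ℝ)} (hB : MeasurableSet B) :
    volume (sndMaxSet c B) ≤ c * volume B := by
  rw [Measure.volume_eq_prod, Measure.prod_apply (measurableSet_sndMaxSet c hB),
    Measure.prod_apply hB, ← lintegral_const_mul _ (measurable_measure_prodMk_left hB)]
  refine lintegral_mono fun s => ?_
  exact volume_maxSet_le c (A := Prod.mk s ⁻¹' B) (measurable_prodMk_left hB)

theorem measurableSet_fstMaxSet (c : ℝ≥0∞) {B : Set (ℝ × ℝ)} (hB : MeasurableSet B) :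
    MeasurableSet (fstMaxSet c B) :=
  measurable_swap (measurableSet_sndMaxSet c (measurable_swap hB))

theorem volume_fstMaxSet_le (c : ℝ≥0∞) {B : Set (ℝ × ℝ)} (hB : MeasurableSet B) :
    volume (fstMaxSet c B) ≤ c * volume B := by
  have hswap : MeasurePreserving (Prod.swap : ℝ × ℝ → ℝ × ℝ) := by
    simpa only [Measure.volume_eq_prod] using Measure.measurePreserving_swap
  rw [fstMaxSet,
    hswap.measure_preimage (measurableSet_sndMaxSet c (measurable_swap hB)).nullMeasurableSet]
  simpa only [hswap.measure_preimage hB.nullMeasurableSet] using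
    volume_sndMaxSet_le c (measurable_swap hB)

namespace DyadicRect

theorem measurableSet_set (R : DyadicRect) : MeasurableSet R.set :=
  R.1.measurableSet_set.prod R.2.measurableSet_set

theorem volume_set (R : DyadicRect) : volume R.set = ENNReal.ofReal R.area := by
  rw [DyadicRect.set, Measure.volume_eq_prod, Measure.prod_prod, R.1.volume_set,
    R.2.volume_set, area, ENNReal.ofReal_mul (by simp [len])]

theorem volume_set_ne_top (R : DyadicRect) : volume R.set ≠ ∞ := by
  simp [volume_set]

theorem set_subset_unitSq (R : DyadicRect) : R.set ⊆ unitSq :=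
  prod_mono (R.1.set_subset_Ico.trans Ico_subset_Icc_self)
    (R.2.set_subset_Ico.trans Ico_subset_Icc_self)

/-- Otherwise at most a quarter of the columns `{s} × J`, `s ∈ I`, would meet `F` in more
than a quarter of their length, and `F` would fill at most half of `I × J`. -/
theorem set_subset_fstMaxSet_sndMaxSet {R : DyadicRect} {F : Set (ℝ × ℝ)}
    (hF : MeasurableSet F) (hR : ENNReal.ofReal R.area / 2 < volume (R.set ∩ F)) :
    R.set ⊆ fstMaxSet 4 (sndMaxSet 4 F) := by
  obtain ⟨I, J⟩ := R
  set G := {s ∈ I.set | volume J.set < 4 * volume (Prod.mk s ⁻¹' (set (I, J) ∩ F))}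
  have hG : volume I.set < 4 * volume G := by
    by_contra! hG
    have hcheb := mul_prod_le_of_subset_prod (μ := volume) (ν := volume) I.measurableSet_set
      ((measurableSet_set (I, J)).inter hF) inter_subset_left 4
    rw [← Measure.volume_eq_prod] at hcheb
    rw [← volume_set, ENNReal.div_lt_iff (by simp) (by simp), DyadicRect.set,
      Measure.volume_eq_prod, Measure.prod_prod, ← Measure.volume_eq_prod] at hR
    have hlt := ENNReal.mul_lt_mul_right (a := 2) (by simp) (by simp) hR
    refine (hlt.trans_le ?_).ne rfl
    calc 2 * (volume (set (I, J) ∩ F) * 2) = 4 * volume (set (I, J) ∩ F) := by ring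
      _ ≤ 4 * volume J.set * volume G + volume J.set * volume I.set := hcheb
      _ ≤ volume J.set * volume I.set + volume J.set * volume I.set := by
          rw [mul_comm 4, mul_assoc]; gcongr
      _ = 2 * (volume I.set * volume J.set) := by ring
  rintro ⟨s, t⟩ ⟨hs, ht⟩
  refine mem_iUnion₂.2 ⟨I, hG.trans_le ?_, hs⟩
  gcongr
  rintro σ ⟨hσ, hJ⟩
  refine ⟨hσ, mem_iUnion₂.2 ⟨J, hJ.trans_le ?_, ht⟩⟩
  gcongr
  exact fun τ hτ => ⟨hτ.1.2, hτ.2⟩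

end DyadicRect

noncomputable def sqSum (f : DyadicRect → ℝ) (x : ℝ × ℝ) : ℝ≥0∞ :=
  ∑' R : DyadicRect, R.set.indicator (fun _ => ENNReal.ofReal (f R ^ 2)) x

theorem sqS_rpow_two (f : DyadicRect → ℝ) (x : ℝ × ℝ) : sqS f x ^ (2 : ℝ) = sqSum f x := by
  rw [sqS, ← ENNReal.rpow_mul]
  norm_num
  rfl

theorem setLIntegral_sqSum (f : DyadicRect → ℝ) (s : Set (ℝ × ℝ)) :
    ∫⁻ x in s, sqSum f x = ∑' R : DyadicRect, ENNReal.ofReal (f R ^ 2) * volume (R.set ∩ s) := by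
  unfold sqSum
  rw [lintegral_tsum fun R => (measurable_const.indicator R.measurableSet_set).aemeasurable]
  congr 1 with R
  rw [lintegral_indicator_const R.measurableSet_set, Measure.restrict_apply R.measurableSet_set]

theorem sqSum_indicator_le (s : Set DyadicRect) (f : DyadicRect → ℝ) (x : ℝ × ℝ) :
    sqSum (s.indicator f) x ≤ sqSum f x := by
  refine ENNReal.tsum_le_tsum fun R => indicator_le_indicator ?_
  by_cases hR : R ∈ s <;> simp [hR]

theorem measurableSet_Fset (f : DyadicRect → ℝ) (n : ℤ) : MeasurableSet (Fset f n) := by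
  have hS : Measurable (sqS f) := ENNReal.continuous_rpow_const.measurable.comp <|
    .tsum fun R => measurable_const.indicator R.measurableSet_set
  exact (measurableSet_Icc.prod measurableSet_Icc).inter (measurableSet_lt measurable_const hS)

theorem sqS_le_of_notMem_Fset {f : DyadicRect → ℝ} {n : ℤ} {x : ℝ × ℝ} (hx : x ∉ Fset f n) :
    sqS f x ≤ 2 ^ (n : ℝ) := by
  by_cases hxU : x ∈ unitSq
  · exact not_lt.1 fun h => hx ⟨hxU, h⟩
  · have hsum : sqSum f x = 0 := ENNReal.tsum_eq_zero.2 fun R =>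
      indicator_of_notMem (fun hR => hxU (R.set_subset_unitSq hR)) _
    rw [← sqS_rpow_two, ENNReal.rpow_eq_zero_iff] at hsum
    rcases hsum with ⟨h, -⟩ | ⟨-, h⟩
    · simp [h]
    · norm_num at h

theorem sqSum_le_of_notMem_Fset {f : DyadicRect → ℝ} {n : ℤ} {x : ℝ × ℝ}
    (hx : x ∉ Fset f (n + 1)) : sqSum f x ≤ 4 * 2 ^ (2 * (n : ℝ)) := by
  calc sqSum f x = sqS f x ^ (2 : ℝ) := (sqS_rpow_two f x).symm
    _ ≤ (2 ^ ((n + 1 : ℤ) : ℝ)) ^ (2 : ℝ) := by gcongr; exact sqS_le_of_notMem_Fset hx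
    _ = 2 ^ (2 : ℝ) * 2 ^ (2 * (n : ℝ)) := by
        rw [← ENNReal.rpow_mul, ← ENNReal.rpow_add _ _ two_ne_zero ENNReal.ofNat_ne_top]
        push_cast
        ring_nf
    _ = 4 * 2 ^ (2 * (n : ℝ)) := by norm_num

theorem l2norm_fAtom_rpow_two_le (f : DyadicRect → ℝ) (n : ℤ) :
    l2norm (fAtom f n) ^ (2 : ℝ) ≤ 2 * ∫⁻ x in (Fset f (n + 1))ᶜ, sqSum (fAtom f n) x := by
  rw [setLIntegral_sqSum, ← ENNReal.tsum_mul_left, l2norm, ← ENNReal.rpow_mul]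
  norm_num
  refine ENNReal.tsum_le_tsum fun R => ?_
  by_cases hR : R ∈ Rcoll f n
  · rw [fAtom, indicator_of_mem hR, ← R.volume_set, mul_left_comm]
    gcongr
    refine measure_le_two_mul_measure_diff R.volume_set_ne_top ?_
    rw [R.volume_set]
    exact hR.2
  · simp [fAtom, hR]

theorem RcollStar_subset (f : DyadicRect → ℝ) (n : ℤ) :
    RcollStar f n ⊆ fstMaxSet 4 (sndMaxSet 4 (Fset f n)) :=
  iUnion₂_subset fun _ hR =>
    DyadicRect.set_subset_fstMaxSet_sndMaxSet (measurableSet_Fset f n) hR.1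

theorem sqSum_fAtom_eq_zero {f : DyadicRect → ℝ} {n : ℤ} {x : ℝ × ℝ} (hx : x ∉ RcollStar f n) :
    sqSum (fAtom f n) x = 0 := by
  refine ENNReal.tsum_eq_zero.2 fun R => ?_
  by_cases hR : R ∈ Rcoll f n
  · exact indicator_of_notMem (fun hxR => hx (mem_biUnion hR hxR)) _
  · simp [fAtom, hR]

theorem sqSum_fAtom_le_indicator (f : DyadicRect → ℝ) (n : ℤ) {x : ℝ × ℝ}
    (hx : x ∉ Fset f (n + 1)) :
    sqSum (fAtom f n) x ≤
      (fstMaxSet 4 (sndMaxSet 4 (Fset f n))).indicator (fun _ => 4 * 2 ^ (2 * (n : ℝ))) x := by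
  by_cases hxE : x ∈ fstMaxSet 4 (sndMaxSet 4 (Fset f n))
  · rw [indicator_of_mem hxE]
    exact (sqSum_indicator_le _ f x).trans (sqSum_le_of_notMem_Fset hx)
  · rw [sqSum_fAtom_eq_zero fun h => hxE (RcollStar_subset f n h)]
    exact zero_le

/-- `‖f_n‖₂² ≤ C 2^{2n} |F_n|` with an absolute constant `C`. -/
theorem atom_l2_estimate :
    ∃ C : ℝ, 0 < C ∧
      ∀ p : ℝ, 0 < p → p ≤ 2 →
        ∀ f : DyadicRect → ℝ, Hnorm p f ≠ ∞ →
          ∀ n : ℤ,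
            l2norm (fAtom f n) ^ (2:ℝ) ≤
              ENNReal.ofReal C * (2 : ℝ≥0∞) ^ (2 * (n:ℝ)) * volume (Fset f n) := by
  refine ⟨128, by norm_num, fun _ _ _ f _ n => ?_⟩
  have hF := measurableSet_Fset f n
  set E := fstMaxSet 4 (sndMaxSet 4 (Fset f n))
  have hE : MeasurableSet E := measurableSet_fstMaxSet 4 (measurableSet_sndMaxSet 4 hF)
  calc l2norm (fAtom f n) ^ (2:ℝ)
      ≤ 2 * ∫⁻ x in (Fset f (n + 1))ᶜ, sqSum (fAtom f n) x := l2norm_fAtom_rpow_two_le f n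
    _ ≤ 2 * ∫⁻ x, E.indicator (fun _ => 4 * 2 ^ (2 * (n : ℝ))) x := by
        gcongr 2 * ?_
        exact (setLIntegral_mono (measurable_const.indicator hE)
          fun x hx => sqSum_fAtom_le_indicator f n hx).trans (setLIntegral_le_lintegral _ _)
    _ = 2 * (4 * 2 ^ (2 * (n : ℝ)) * volume E) := by rw [lintegral_indicator_const hE]
    _ ≤ 2 * (4 * 2 ^ (2 * (n : ℝ)) * (4 * (4 * volume (Fset f n)))) := by
        gcongr
        exact (volume_fstMaxSet_le 4 (measurableSet_sndMaxSet 4 hF)).trans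
          (by gcongr; exact volume_sndMaxSet_le 4 hF)
    _ = ENNReal.ofReal 128 * 2 ^ (2 * (n : ℝ)) * volume (Fset f n) := by
        rw [ENNReal.ofReal_ofNat]
        ring
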